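/- Fix any c > 1/2 and a ∈ {0,1}. For every k > 0 there is a constant C(k) such that for all real x with 0 < x < 1: |W_a(x)| ≤ C(k) · x^k. -/

import Mathlib

open Complex MeasureTheory

/-- `W_a(x) = (1/2πi) ∫_{(c)} (Γ(1/4+(w+a)/2)² / Γ(1/4+a/2)²) x^w dw/w`,
parametrized by the vertical line `w = c + it`. -/
noncomputable def Wfun (c : ℝ) (a : ℕ) (x : ℝ) : ℂ :=
  ((1 / (2 * Real.pi) : ℝ) : ℂ) * ∫ t : ℝ,
    (Complex.Gamma (1 / 4 + (((c : ℂ) + t * Complex.I) + a) / 2)) ^ 2 /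
      (Complex.Gamma (1 / 4 + (a : ℂ) / 2)) ^ 2 *
      (x : ℂ) ^ ((c : ℂ) + t * Complex.I) / ((c : ℂ) + t * Complex.I)

/-!
On a closed vertical strip `c ≤ Re w ≤ A` in the right half-plane, the integrand
`Γ(1/4 + (w+a)/2)² x^w / w` is holomorphic and `O(x^σ / (1 + t²))` at `w = σ + it`, because
`|Γ(s)| ≤ Γ(Re s)` and `|s Γ(s)| = |Γ(s + 1)|`. Cauchy's theorem on rectangles therefore moves
the line of integration from `c` to any `A ≥ c`, and on `Re w = A` the trivial bound gives
`|W_a(x)| ≪ x^A`. Taking `A ≥ k` and `x < 1` yields `x^A ≤ x^k`.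
-/

open Set Filter Topology

namespace Complex

theorem norm_Gamma_le_Gamma_re {s : ℂ} (hs : 0 < s.re) : ‖Gamma s‖ ≤ Real.Gamma s.re := by
  rw [Gamma_eq_integral hs, Real.Gamma_eq_integral hs]
  refine (norm_integral_le_integral_norm _).trans_eq (setIntegral_congr_fun measurableSet_Ioi
    fun x hx => ?_)
  rw [norm_mul, norm_real, Real.norm_of_nonneg (Real.exp_pos _).le,
    norm_cpow_eq_rpow_re_of_pos hx]
  simp

theorem norm_Gamma_mul_abs_im_le {s : ℂ} (hs : 0 < s.re) :
    ‖Gamma s‖ * |s.im| ≤ Real.Gamma (s.re + 1) := by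
  have hs0 : s ≠ 0 := by rintro rfl; simp at hs
  calc ‖Gamma s‖ * |s.im| ≤ ‖Gamma s‖ * ‖s‖ := by gcongr; exact abs_im_le_norm s
    _ = ‖Gamma (s + 1)‖ := by rw [Gamma_add_one s hs0, norm_mul, mul_comm]
    _ ≤ Real.Gamma (s.re + 1) := by
      simpa using norm_Gamma_le_Gamma_re (s := s + 1) (by rw [add_re, one_re]; linarith)

theorem differentiableAt_Gamma_of_re_pos {s : ℂ} (hs : 0 < s.re) :
    DifferentiableAt ℂ Gamma s :=
  differentiableAt_Gamma s fun m hm => hs.not_ge (by simp [hm])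

theorem exists_norm_Gamma_sq_mul_le {a b : ℝ} (ha : 0 < a) :
    ∃ M > 0, ∀ s : ℂ, s.re ∈ Icc a b → ‖Gamma s‖ ^ 2 * (1 + s.im ^ 2) ≤ M := by
  have hcont : ContinuousOn Real.Gamma (Icc a (b + 1)) := fun u hu =>
    (Real.differentiableAt_Gamma fun m => by linarith [hu.1, m.cast_nonneg (α := ℝ)]
      ).continuousAt.continuousWithinAt
  obtain ⟨B, hB⟩ := isCompact_Icc.exists_bound_of_continuousOn hcont
  refine ⟨2 * B ^ 2 + 1, by positivity, fun s hs => ?_⟩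
  have hre : 0 < s.re := ha.trans_le hs.1
  have hΓ : ‖Gamma s‖ ≤ B := (norm_Gamma_le_Gamma_re hre).trans <|
    (le_abs_self _).trans (hB _ ⟨hs.1, by linarith [hs.2]⟩)
  have hΓim : ‖Gamma s‖ * |s.im| ≤ B := (norm_Gamma_mul_abs_im_le hre).trans <|
    (le_abs_self _).trans (hB _ ⟨by linarith [hs.1], by linarith [hs.2]⟩)
  calc ‖Gamma s‖ ^ 2 * (1 + s.im ^ 2) = ‖Gamma s‖ ^ 2 + (‖Gamma s‖ * |s.im|) ^ 2 := by
        rw [mul_pow, sq_abs]; ring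
    _ ≤ B ^ 2 + B ^ 2 := by gcongr
    _ ≤ 2 * B ^ 2 + 1 := by linarith

end Complex

theorem tendsto_inv_one_add_sq_cocompact :
    Tendsto (fun t : ℝ => (1 + t ^ 2)⁻¹) (cocompact ℝ) (𝓝 0) := by
  refine tendsto_inv_atTop_zero.comp (tendsto_atTop_add_const_left _ 1 ?_)
  exact ((tendsto_pow_atTop two_ne_zero).comp tendsto_norm_cocompact_atTop).congr fun t => by
    simp

section VerticalShift

variable {E : Type*} [NormedAddCommGroup E] {f : ℂ → E} {σ₁ σ₂ : ℝ} {g : ℝ → ℝ}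

theorem integrable_comp_vertical_of_norm_le {σ : ℝ} (hf : ContinuousOn f (re ⁻¹' {σ}))
    (hg : Integrable g) (hfg : ∀ t : ℝ, ‖f (σ + t * I)‖ ≤ g t) :
    Integrable fun t : ℝ => f (σ + t * I) := by
  have hcont : Continuous fun t : ℝ => f (σ + t * I) :=
    hf.comp_continuous (by fun_prop) fun t => by simp
  exact hg.mono' hcont.aestronglyMeasurable (.of_forall hfg)

variable [NormedSpace ℂ E]

theorem norm_intervalIntegral_vertical_sub_le (hσ : σ₁ ≤ σ₂)
    (hf : DifferentiableOn ℂ f (re ⁻¹' Icc σ₁ σ₂))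
    (hfg : ∀ σ ∈ Icc σ₁ σ₂, ∀ t : ℝ, ‖f (σ + t * I)‖ ≤ g t) (T : ℝ) :
    ‖(∫ t in -T..T, f (σ₂ + t * I)) - ∫ t in -T..T, f (σ₁ + t * I)‖ ≤
      (g T + g (-T)) * (σ₂ - σ₁) := by
  have hrect := integral_boundary_rect_eq_zero_of_differentiableOn f (σ₁ + (-T : ℝ) * I)
    (σ₂ + T * I) (hf.mono fun w hw => by
      rw [mem_reProdIm] at hw; simpa [uIcc_of_le hσ] using hw.1)
  simp only [add_re, add_im, ofReal_re, ofReal_im, mul_re, mul_im, I_re, I_im, mul_zero,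
    mul_one, sub_zero, add_zero, zero_add] at hrect
  have hhor : ∀ τ : ℝ, ‖∫ r in σ₁..σ₂, f (r + τ * I)‖ ≤ g τ * (σ₂ - σ₁) := fun τ => by
    refine (intervalIntegral.norm_integral_le_of_norm_le_const fun r hr =>
      hfg r (Ioc_subset_Icc_self (uIoc_of_le hσ ▸ hr)) τ).trans_eq ?_
    rw [abs_of_nonneg (sub_nonneg.2 hσ)]
  calc ‖(∫ t in -T..T, f (σ₂ + t * I)) - ∫ t in -T..T, f (σ₁ + t * I)‖
      = ‖I • ((∫ t in -T..T, f (σ₂ + t * I)) - ∫ t in -T..T, f (σ₁ + t * I))‖ := by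
        rw [norm_smul, norm_I, one_mul]
    _ = ‖(∫ r in σ₁..σ₂, f (r + T * I)) - ∫ r in σ₁..σ₂, f (r + (-T : ℝ) * I)‖ := by
        congr 1; linear_combination (norm := module) hrect
    _ ≤ (g T + g (-T)) * (σ₂ - σ₁) := by
        linarith [norm_sub_le (∫ r in σ₁..σ₂, f (r + T * I))
          (∫ r in σ₁..σ₂, f (r + (-T : ℝ) * I)), hhor T, hhor (-T)]

theorem integral_vertical_eq_of_differentiableOn [CompleteSpace E] (hσ : σ₁ ≤ σ₂)
    (hf : DifferentiableOn ℂ f (re ⁻¹' Icc σ₁ σ₂)) (hg : Integrable g)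
    (hg0 : Tendsto g (cocompact ℝ) (𝓝 0))
    (hfg : ∀ σ ∈ Icc σ₁ σ₂, ∀ t : ℝ, ‖f (σ + t * I)‖ ≤ g t) :
    ∫ t : ℝ, f (σ₁ + t * I) = ∫ t : ℝ, f (σ₂ + t * I) := by
  have hlim : ∀ σ ∈ Icc σ₁ σ₂, Tendsto (fun T : ℝ => ∫ t in -T..T, f (σ + t * I)) atTop
      (𝓝 (∫ t : ℝ, f (σ + t * I))) := fun σ hσ' =>
    intervalIntegral_tendsto_integral (integrable_comp_vertical_of_norm_le
      (hf.continuousOn.mono fun w hw => by simp_all) hg (hfg σ hσ'))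
      tendsto_neg_atTop_atBot tendsto_id
  have hg' : Tendsto g atBot (𝓝 0) ∧ Tendsto g atTop (𝓝 0) := by
    rwa [cocompact_eq_atBot_atTop, tendsto_sup] at hg0
  have hbound : Tendsto (fun T : ℝ => (g T + g (-T)) * (σ₂ - σ₁)) atTop (𝓝 0) := by
    simpa using (hg'.2.add (hg'.1.comp tendsto_neg_atTop_atBot)).mul_const (σ₂ - σ₁)
  have hdiff := squeeze_zero_norm (norm_intervalIntegral_vertical_sub_le hσ hf hfg) hbound
  exact (sub_eq_zero.1 (tendsto_nhds_unique
    ((hlim σ₂ (right_mem_Icc.2 hσ)).sub (hlim σ₁ (left_mem_Icc.2 hσ))) hdiff)).symm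

end VerticalShift

noncomputable def Wintegrand (a : ℕ) (x : ℝ) (w : ℂ) : ℂ :=
  Gamma (1 / 4 + (w + a) / 2) ^ 2 / Gamma (1 / 4 + (a : ℂ) / 2) ^ 2 * (x : ℂ) ^ w / w

theorem differentiableOn_Wintegrand (a : ℕ) {x : ℝ} (hx : x ≠ 0) :
    DifferentiableOn ℂ (Wintegrand a x) {w | 0 < w.re} := by
  intro w hw
  have hw0 : w ≠ 0 := by rintro rfl; simp at hw
  have hre : (1 / 4 + (w + a) / 2 : ℂ).re = 1 / 4 + (w.re + a) / 2 := by simp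
  have hΓ : DifferentiableAt ℂ (fun w : ℂ => Gamma (1 / 4 + (w + a) / 2)) w :=
    (differentiableAt_Gamma_of_re_pos (hre ▸ by linarith [hw.out, a.cast_nonneg (α := ℝ)])).comp w
      (by fun_prop)
  have hpow : DifferentiableAt ℂ (fun w : ℂ => (x : ℂ) ^ w) w :=
    differentiableAt_id.const_cpow (.inl (ofReal_ne_zero.2 hx))
  exact (((hΓ.pow 2).div_const _).mul hpow).div differentiableAt_id hw0 |>.differentiableWithinAt

theorem exists_norm_Wintegrand_le (a : ℕ) {c A : ℝ} (hc : 0 < c) :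
    ∃ K > 0, ∀ x > 0, ∀ σ ∈ Icc c A, ∀ t : ℝ,
      ‖Wintegrand a x (σ + t * I)‖ ≤ K * x ^ σ * (1 + t ^ 2)⁻¹ := by
  obtain ⟨M, hM, hΓ⟩ := exists_norm_Gamma_sq_mul_le (a := 1 / 4 + c / 2) (b := 1 / 4 + (A + a) / 2)
    (by positivity)
  have hΓ₀ : 0 < ‖Gamma (1 / 4 + (a : ℂ) / 2)‖ :=
    norm_pos_iff.2 (Gamma_ne_zero_of_re_pos (by simp; positivity))
  refine ⟨4 * M / (‖Gamma (1 / 4 + (a : ℂ) / 2)‖ ^ 2 * c), by positivity, fun x hx σ hσ t => ?_⟩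
  have hGamma : ‖Gamma (1 / 4 + ((σ + t * I) + a) / 2)‖ ^ 2 ≤ 4 * M * (1 + t ^ 2)⁻¹ := by
    have hre : (1 / 4 + ((σ + t * I) + a) / 2 : ℂ).re = 1 / 4 + (σ + a) / 2 := by simp
    have him : (1 / 4 + ((σ + t * I) + a) / 2 : ℂ).im = t / 2 := by simp
    have hbound := hΓ _ (by rw [hre]; constructor <;> linarith [hσ.1, hσ.2, a.cast_nonneg (α := ℝ)])
    rw [him] at hbound
    -- the imaginary part of the Gamma argument is `t / 2`, whence the factor `4`
    rw [le_mul_inv_iff₀ (by positivity)]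
    nlinarith [sq_nonneg ‖Gamma (1 / 4 + ((σ + t * I) + a) / 2)‖]
  have hnorm : c ≤ ‖(σ : ℂ) + t * I‖ := by
    refine hσ.1.trans (le_trans (le_abs_self σ) ?_)
    simpa using abs_re_le_norm ((σ : ℂ) + t * I)
  rw [Wintegrand, norm_div, norm_mul, norm_div, norm_pow, norm_pow,
    norm_cpow_eq_rpow_re_of_pos hx]
  simp only [add_re, ofReal_re, mul_re, ofReal_im, I_re, I_im, mul_zero, sub_zero, mul_one,
    add_zero]
  calc _ ≤ 4 * M * (1 + t ^ 2)⁻¹ / ‖Gamma (1 / 4 + (a : ℂ) / 2)‖ ^ 2 * x ^ σ / c := by gcongr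
    _ = _ := by ring

theorem Wfun_eq_integral_Wintegrand (c : ℝ) (a : ℕ) (x : ℝ) :
    Wfun c a x = ((1 / (2 * Real.pi) : ℝ) : ℂ) * ∫ t : ℝ, Wintegrand a x (c + t * I) := rfl

theorem Wfun_eq_of_le (a : ℕ) {c A x : ℝ} (hc : 0 < c) (hcA : c ≤ A) (hx : 0 < x) :
    Wfun c a x = Wfun A a x := by
  obtain ⟨K, hK0, hK⟩ := exists_norm_Wintegrand_le a (A := A) hc
  simp only [Wfun_eq_integral_Wintegrand]
  congr 1
  refine integral_vertical_eq_of_differentiableOn hcA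
    ((differentiableOn_Wintegrand a hx.ne').mono fun w hw => hc.trans_le hw.1)
    (integrable_inv_one_add_sq.const_mul (K * (x ^ c + x ^ A)))
    (by simpa using tendsto_inv_one_add_sq_cocompact.const_mul (K * (x ^ c + x ^ A)))
    fun σ hσ t => (hK x hx σ hσ t).trans ?_
  have hxσ : x ^ σ ≤ x ^ c + x ^ A := by
    rcases le_total x 1 with hx1 | hx1
    · linarith [Real.rpow_le_rpow_of_exponent_ge hx hx1 hσ.1, Real.rpow_nonneg hx.le A]
    · linarith [Real.rpow_le_rpow_of_exponent_le hx1 hσ.2, Real.rpow_nonneg hx.le c]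
  gcongr

theorem exists_norm_Wfun_le (a : ℕ) {c : ℝ} (hc : 0 < c) :
    ∃ K > 0, ∀ x > 0, ‖Wfun c a x‖ ≤ K * x ^ c := by
  obtain ⟨K, hK0, hK⟩ := exists_norm_Wintegrand_le a (A := c) hc
  refine ⟨K / 2, by positivity, fun x hx => ?_⟩
  have hint : ‖∫ t : ℝ, Wintegrand a x (c + t * I)‖ ≤ K * x ^ c * Real.pi := by
    refine (norm_integral_le_of_norm_le (integrable_inv_one_add_sq.const_mul _)
      (.of_forall (hK x hx c (left_mem_Icc.2 le_rfl)))).trans_eq ?_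
    rw [integral_const_mul, integral_univ_inv_one_add_sq]
  rw [Wfun_eq_integral_Wintegrand, norm_mul, norm_real, Real.norm_of_nonneg (by positivity)]
  calc 1 / (2 * Real.pi) * ‖∫ t : ℝ, Wintegrand a x (c + t * I)‖
      ≤ 1 / (2 * Real.pi) * (K * x ^ c * Real.pi) := by gcongr
    _ = K / 2 * x ^ c := by field_simp

theorem Wfun_small_general (c : ℝ) (hc : 1 / 2 < c) (a : ℕ)
    (k : ℝ) :
    ∃ C : ℝ, 0 < C ∧ ∀ x : ℝ, 0 < x → x < 1 →
      ‖Wfun c a x‖ ≤ C * x ^ k := by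
  have hc0 : 0 < c := by linarith
  obtain ⟨K, hK, hW⟩ := exists_norm_Wfun_le a (hc0.trans_le (le_max_left c k))
  refine ⟨K, hK, fun x hx hx1 => ?_⟩
  rw [Wfun_eq_of_le a hc0 (le_max_left c k) hx]
  exact (hW x hx).trans <| mul_le_mul_of_nonneg_left
    (Real.rpow_le_rpow_of_exponent_ge hx hx1.le (le_max_right c k)) hK.le

/-- **Behaviour of `W_a(x)` for `0 < x < 1`:** for every `k > 0` there is `C(k)` with
`|W_a(x)| ≤ C(k) x^k` for all `0 < x < 1`. -/
theorem Wfun_small (c : ℝ) (hc : 1 / 2 < c) (a : ℕ) (ha : a = 0 ∨ a = 1)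
    (k : ℝ) (hk : 0 < k) :
    ∃ C : ℝ, 0 < C ∧ ∀ x : ℝ, 0 < x → x < 1 →
      ‖Wfun c a x‖ ≤ C * x ^ k :=
  Wfun_small_general c hc a k
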